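/- arXiv:1303.5940 — 7 statements merged into one kernel-verified Lean document; each statement's English description precedes it below -/
import Mathlib

section
/- In a presheaf of sets X → E over a meet-semilattice, define x ≤ y iff x = y|^{p(y)}_{p(x)}, and x ∼ y iff x ∧ y exists and p(x ∧ y) = p(x) ∧ p(y). Then: (1) if x, y ≤ z then x ∼ y; (2) if x ∼ y and p(x) ≤ p(y) then x ≤ y; (3) x ≤ y iff x = x ∘ y; (4) x ∼ y iff x ∘ y = y ∘ x, where x ∘ y = y|^{p(y)}_{p(x) ∧ p(y)}. -/
/-- A presheaf of sets over a meet-semilattice `E`: a carrier `X` with projection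
`p : X → E` and restriction maps `res x f h : X` for `f ≤ p x`, satisfying the
identity and composition laws. -/
structure PresheafOfSets (E : Type*) [SemilatticeInf E] where
  X : Type*
  p : X → E
  res : ∀ x : X, ∀ f : E, f ≤ p x → X
  p_res : ∀ x f h, p (res x f h) = f
  res_self : ∀ x, res x (p x) le_rfl = x
  res_comp : ∀ x f g (hf : f ≤ p x) (_ : g ≤ f) (hg : g ≤ p x)
      (hg' : g ≤ p (res x f hf)), res (res x f hf) g hg' = res x g hg

namespace PresheafOfSets

variable {E : Type*} [SemilatticeInf E] (P : PresheafOfSets E)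

/-- The natural partial order: `x ≤ y` iff `x` is the restriction of `y` to `p x`. -/
def le (x y : P.X) : Prop := ∃ h : P.p x ≤ P.p y, x = P.res y (P.p x) h

/-- The right normal band operation `x ∘ y = y|^{p y}_{p x ⊓ p y}`. -/
def circ (x y : P.X) : P.X := P.res y (P.p x ⊓ P.p y) inf_le_right

/-- `m` is the meet of `x` and `y` with respect to the natural partial order. -/
def IsMeet (m x y : P.X) : Prop :=
  P.le m x ∧ P.le m y ∧ ∀ z, P.le z x → P.le z y → P.le z m

/-- `j` is the join of `x` and `y` with respect to the natural partial order. -/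
def IsJoin (j x y : P.X) : Prop :=
  P.le x j ∧ P.le y j ∧ ∀ z, P.le x z → P.le y z → P.le j z

/-- `x ∼ y`: the meet `x ∧ y` exists and `p (x ∧ y) = p x ⊓ p y`. -/
def Compatible (x y : P.X) : Prop :=
  ∃ m, P.IsMeet m x y ∧ P.p m = P.p x ⊓ P.p y

lemma res_congr (x : P.X) {f g : E} (h : f ≤ P.p x) (e : f = g) :
    P.res x f h = P.res x g (e ▸ h) := by subst e; rfl

lemma res_eq_res {x y : P.X} (e : x = y) (f : E) (hx : f ≤ P.p x) :
    P.res x f hx = P.res y f (e ▸ hx) := by subst e; rfl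

lemma res_le (x : P.X) (f : E) (h : f ≤ P.p x) : P.le (P.res x f h) x :=
  ⟨by rw [P.p_res]; exact h, P.res_congr x h (P.p_res x f h).symm⟩

lemma le_of_res {x y : P.X} {f : E} {h : f ≤ P.p y} (e : x = P.res y f h) :
    P.le x y := e ▸ P.res_le y f h

/-- if `w ≤ v` then restricting `v` to `f ≤ p w` agrees with restricting `w`. -/
lemma res_of_le {w v : P.X} (hwv : P.le w v) (f : E) (hf : f ≤ P.p w) :
    P.res v f (hf.trans hwv.1) = P.res w f hf := by
  obtain ⟨h, e⟩ := hwv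
  rw [P.res_eq_res e f hf, P.res_comp v (P.p w) f h hf (hf.trans h)
    (by rw [P.p_res]; exact hf)]

lemma le_trans' {x y z : P.X} (hxy : P.le x y) (hyz : P.le y z) : P.le x z := by
  refine ⟨hxy.1.trans hyz.1, ?_⟩
  rw [P.res_of_le hyz (P.p x) hxy.1]
  exact hxy.2

end PresheafOfSets

/-- Basic properties of the order and compatibility relation on a presheaf of sets. -/
theorem presheaf_order_compatibility {E : Type*} [SemilatticeInf E] (P : PresheafOfSets E) :
    (∀ x y z : P.X, P.le x z → P.le y z → P.Compatible x y) ∧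
    (∀ x y : P.X, P.Compatible x y → P.p x ≤ P.p y → P.le x y) ∧
    (∀ x y : P.X, P.le x y ↔ x = P.circ x y) ∧
    (∀ x y : P.X, P.Compatible x y ↔ P.circ x y = P.circ y x) := by
  have compat : ∀ x y z : P.X, P.le x z → P.le y z → P.Compatible x y := by
    intro x y z hx hy
    have hle : P.p x ⊓ P.p y ≤ P.p z := le_trans inf_le_left hx.1
    refine ⟨P.res z (P.p x ⊓ P.p y) hle, ⟨?_, ?_, ?_⟩, P.p_res ..⟩
    · exact P.le_of_res (P.res_of_le hx (P.p x ⊓ P.p y) inf_le_left)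
    · exact P.le_of_res (P.res_of_le hy (P.p x ⊓ P.p y) inf_le_right)
    · intro w hwx hwy
      have hpw : P.p w ≤ P.p x ⊓ P.p y := le_inf hwx.1 hwy.1
      have hwz : P.le w z := P.le_trans' hwx hx
      refine P.le_of_res (f := P.p w)
        (h := by rw [P.p_res]; exact hpw) ?_
      rw [P.res_comp z (P.p x ⊓ P.p y) (P.p w) hle hpw (hpw.trans hle)
        (by rw [P.p_res]; exact hpw)]
      exact hwz.2
  refine ⟨compat, ?_, ?_, ?_⟩
  · rintro x y ⟨m, ⟨⟨hmx, emx⟩, hmy, _⟩, hpm⟩ hpxy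
    have hmx' : P.p m = P.p x := by rw [hpm, inf_eq_left.mpr hpxy]
    have : m = x := by
      rw [emx, P.res_congr x hmx hmx', P.res_self]
    exact this ▸ hmy
  · intro x y
    constructor
    · rintro ⟨h, e⟩
      have hinf : P.p x ⊓ P.p y = P.p x := inf_eq_left.mpr h
      show x = P.res y (P.p x ⊓ P.p y) inf_le_right
      rw [P.res_congr y inf_le_right hinf, ← e]
    · intro e; exact P.le_of_res e
  · intro x y
    constructor
    · rintro ⟨m, ⟨hmx, hmy, _⟩, hpm⟩
      have e1 : P.circ x y = m := by
        show P.res y (P.p x ⊓ P.p y) inf_le_right = m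
        rw [P.res_congr y inf_le_right hpm.symm,
          P.res_of_le hmy (P.p m) le_rfl, P.res_self]
      have e2 : P.circ y x = m := by
        have hpm2 : P.p y ⊓ P.p x = P.p m := by rw [hpm, inf_comm]
        show P.res x (P.p y ⊓ P.p x) inf_le_right = m
        rw [P.res_congr x inf_le_right hpm2,
          P.res_of_le hmx (P.p m) le_rfl, P.res_self]
      rw [e1, e2]
    · intro h
      have hpm : P.p (P.circ x y) = P.p x ⊓ P.p y := P.p_res ..
      refine ⟨P.circ x y, ⟨?_, ?_, ?_⟩, hpm⟩
      · exact P.le_of_res (h.trans rfl)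
      · exact P.le_of_res rfl
      · intro w hwx hwy
        have hpw : P.p w ≤ P.p x ⊓ P.p y := le_inf hwx.1 hwy.1
        refine P.le_of_res (y := P.circ x y) (f := P.p w)
          (h := by rw [hpm]; exact hpw) ?_
        show w = P.res (P.res y (P.p x ⊓ P.p y) inf_le_right) (P.p w) _
        rw [P.res_comp y (P.p x ⊓ P.p y) (P.p w) inf_le_right hpw
          (hpw.trans inf_le_right) (by rw [P.p_res]; exact hpw)]
        exact hwy.2
end

section
/- Let B be a lattice and X → B a presheaf of sets with global support over B. If x ∼ y (i.e., x ∧ y exists and p(x ∧ y) = p(x) ∧ p(y)) and x ∨ y exists (with respect to the order x ≤ y iff x = y|^{p(y)}_{p(x)}), then p(x ∨ y) = p(x) ∨ p(y). -/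
/-- Over a lattice, if `x ∼ y` and the join `x ∨ y` exists then `p (x ∨ y) = p x ⊔ p y`. -/
theorem presheaf_p_join {B : Type*} [Lattice B] (P : PresheafOfSets B)
    (hsurj : Function.Surjective P.p) (x y j : P.X)
    (hxy : P.Compatible x y) (hj : P.IsJoin j x y) :
    P.p j = P.p x ⊔ P.p y := by
  obtain ⟨⟨hxj, hx⟩, ⟨hyj, hy⟩, hlub⟩ := hj
  have hle : P.p x ⊔ P.p y ≤ P.p j := sup_le hxj hyj
  set z := P.res j (P.p x ⊔ P.p y) hle with hz
  have hpz : P.p z = P.p x ⊔ P.p y := P.p_res _ _ _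
  have hxz : P.le x z := by
    refine ⟨by rw [hpz]; exact le_sup_left, ?_⟩
    exact hx.trans (P.res_comp j (P.p x ⊔ P.p y) (P.p x) hle le_sup_left hxj _).symm
  have hyz : P.le y z := by
    refine ⟨by rw [hpz]; exact le_sup_right, ?_⟩
    exact hy.trans (P.res_comp j (P.p x ⊔ P.p y) (P.p y) hle le_sup_right hyj _).symm
  obtain ⟨hjz, _⟩ := hlub z hxz hyz
  exact le_antisymm (hpz ▸ hjz) hle
end

section
/- Let X → B be a Boolean set with x ∘ y = y|^{p(y)}_{p(x)∧p(y)} and x • y = x ∨ (y \ x). Then the absorption laws hold: x = x ∘ (x • y), x = (y • x) ∘ x, x = x • (x ∘ y), and x = (y ∘ x) • x. -/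
/-- A Boolean set: a presheaf of sets with global support over a generalized Boolean
algebra `B`, with a minimum element `zero`, joins of compatible pairs, and such that
`p x = ⊥` implies `x = zero`. -/
structure BooleanSet (B : Type*) [GeneralizedBooleanAlgebra B] extends PresheafOfSets B where
  p_surj : Function.Surjective toPresheafOfSets.p
  zero : toPresheafOfSets.X
  zero_le : ∀ x, toPresheafOfSets.le zero x
  eq_zero : ∀ x, toPresheafOfSets.p x = ⊥ → x = zero
  join_exists : ∀ x y, toPresheafOfSets.Compatible x y →
    ∃ j, toPresheafOfSets.IsJoin j x y

namespace BooleanSet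

variable {B : Type*} [GeneralizedBooleanAlgebra B] (S : BooleanSet B)

/-- `y \ x = y|^{p y}_{p y \ p x}`. -/
def minus (y x : S.X) : S.X := S.res y (S.p y \ S.p x) sdiff_le

end BooleanSet

namespace BooleanSetAux

variable {B : Type*} [GeneralizedBooleanAlgebra B] (S : BooleanSet B)

lemma res_congr_x {x x' : S.X} (e : x = x') (f : B) (h : f ≤ S.p x) :
    S.res x f h = S.res x' f (e ▸ h) := by subst e; rfl

lemma res_congr_f (x : S.X) {f g : B} (e : f = g) (hf : f ≤ S.p x) :
    S.res x f hf = S.res x g (e ▸ hf) := by subst e; rfl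

lemma le_refl (x : S.X) : S.le x x := ⟨le_rfl, (S.res_self x).symm⟩

lemma res_le (x : S.X) (f : B) (h : f ≤ S.p x) : S.le (S.res x f h) x := by
  refine ⟨by rw [S.p_res]; exact h, ?_⟩
  simp only [S.p_res]

lemma le_of_eq_res {x y : S.X} {f : B} (h : f ≤ S.p y) (e : x = S.res y f h) : S.le x y := by
  subst e; exact res_le S y f h

lemma le_trans {x y z : S.X} (hxy : S.le x y) (hyz : S.le y z) : S.le x z := by
  obtain ⟨h1, e1⟩ := hxy
  obtain ⟨h2, e2⟩ := hyz
  have key : S.res y (S.p x) h1 = S.res z (S.p x) (h1.trans h2) := by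
    calc S.res y (S.p x) h1
        = S.res (S.res z (S.p y) h2) (S.p x) (e2 ▸ h1) := res_congr_x S e2 (S.p x) h1
      _ = S.res z (S.p x) (h1.trans h2) := S.res_comp z (S.p y) (S.p x) h2 h1 (h1.trans h2) _
  exact le_of_eq_res S (h1.trans h2) (e1.trans key)

lemma le_antisymm {x y : S.X} (hxy : S.le x y) (hp : S.p y ≤ S.p x) : x = y := by
  obtain ⟨h1, e1⟩ := hxy
  have hpe : S.p x = S.p y := _root_.le_antisymm h1 hp
  calc x = S.res y (S.p x) h1 := e1
    _ = S.res y (S.p y) (hpe ▸ h1) := res_congr_f S y hpe h1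
    _ = y := S.res_self y

lemma p_zero : S.p S.zero = ⊥ := by
  obtain ⟨x0, hx0⟩ := S.p_surj ⊥
  obtain ⟨h, _⟩ := S.zero_le x0
  rw [hx0] at h
  exact _root_.le_antisymm h bot_le

lemma join_p {j x y : S.X} (h : S.IsJoin j x y) : S.p j = S.p x ⊔ S.p y := by
  obtain ⟨hx, hy, hmin⟩ := h
  have hub : S.p x ⊔ S.p y ≤ S.p j := sup_le hx.1 hy.1
  have hpz : S.p (S.res j (S.p x ⊔ S.p y) hub) = S.p x ⊔ S.p y := S.p_res _ _ _
  have hxz : S.le x (S.res j (S.p x ⊔ S.p y) hub) := by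
    obtain ⟨h1, e1⟩ := hx
    exact le_of_eq_res S (by rw [hpz]; exact le_sup_left)
      (e1.trans (S.res_comp j (S.p x ⊔ S.p y) (S.p x) hub le_sup_left h1 _).symm)
  have hyz : S.le y (S.res j (S.p x ⊔ S.p y) hub) := by
    obtain ⟨h1, e1⟩ := hy
    exact le_of_eq_res S (by rw [hpz]; exact le_sup_right)
      (e1.trans (S.res_comp j (S.p x ⊔ S.p y) (S.p y) hub le_sup_right h1 _).symm)
  have := (hmin _ hxz hyz).1
  rw [hpz] at this
  exact _root_.le_antisymm this hub

lemma p_minus (y x : S.X) : S.p (S.minus y x) = S.p y \ S.p x := S.p_res _ _ _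

lemma p_circ (x y : S.X) : S.p (S.circ x y) = S.p x ⊓ S.p y := S.p_res _ _ _

lemma compat_minus (x y : S.X) : S.Compatible x (S.minus y x) := by
  refine ⟨S.zero, ⟨S.zero_le x, S.zero_le _, fun z hzx hzy => ?_⟩, ?_⟩
  · have hz : S.p z = ⊥ := by
      have h1 := hzx.1
      have h2 := hzy.1
      rw [p_minus S] at h2
      have h3 : S.p z ≤ S.p x ⊓ (S.p y \ S.p x) := le_inf h1 h2
      rw [inf_sdiff_self_right] at h3
      exact _root_.le_antisymm h3 bot_le
    rw [S.eq_zero z hz]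
    exact le_refl S _
  · rw [p_zero, p_minus S, inf_sdiff_self_right]

lemma le_res_of_le {x j : S.X} (h : S.le x j) : x = S.res j (S.p x) h.1 := h.2

end BooleanSetAux

/-- The absorption laws in a Boolean set:
`x = x ∘ (x • y)`, `x = (y • x) ∘ x`, `x = x • (x ∘ y)` and `x = (y ∘ x) • x`. -/
theorem booleanSet_absorption {B : Type*} [GeneralizedBooleanAlgebra B] (S : BooleanSet B) :
    ∃ bullet : S.X → S.X → S.X,
      (∀ x y, S.IsJoin (bullet x y) x (S.minus y x)) ∧
      (∀ x y : S.X, x = S.circ x (bullet x y)) ∧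
      (∀ x y : S.X, x = S.circ (bullet y x) x) ∧
      (∀ x y : S.X, x = bullet x (S.circ x y)) ∧
      (∀ x y : S.X, x = bullet (S.circ y x) x) := by
  classical
  open BooleanSetAux in
  have compat := compat_minus S
  choose bullet hb using fun x y => S.join_exists x (S.minus y x) (compat x y)
  refine ⟨bullet, hb, ?_, ?_, ?_, ?_⟩
  · -- x = x ∘ (x • y)
    intro x y
    have hj := hb x y
    have hinf : S.p x ⊓ S.p (bullet x y) = S.p x := by
      rw [join_p S hj, p_minus S]
      exact inf_eq_left.mpr (le_sup_left)
    calc x = S.res (bullet x y) (S.p x) hj.1.1 := hj.1.2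
      _ = S.res (bullet x y) (S.p x ⊓ S.p (bullet x y)) (hinf.symm ▸ hj.1.1) :=
          res_congr_f S _ hinf.symm _
      _ = S.circ x (bullet x y) := rfl
  · -- x = (y • x) ∘ x
    intro x y
    have hj := hb y x
    have hinf : S.p (bullet y x) ⊓ S.p x = S.p x := by
      rw [join_p S hj, p_minus S, inf_comm (S.p y ⊔ S.p x \ S.p y) (S.p x), inf_sup_left,
        inf_eq_right.mpr (sdiff_le : S.p x \ S.p y ≤ S.p x), sup_inf_sdiff]
    calc x = S.res x (S.p x) le_rfl := (S.res_self x).symm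
      _ = S.res x (S.p (bullet y x) ⊓ S.p x) (hinf.symm ▸ le_rfl) :=
          res_congr_f S _ hinf.symm _
      _ = S.circ (bullet y x) x := rfl
  · -- x = x • (x ∘ y)
    intro x y
    have hj := hb x (S.circ x y)
    have hm : S.minus (S.circ x y) x = S.zero := by
      apply S.eq_zero
      rw [p_minus S, p_circ S, sdiff_eq_bot_iff]
      exact inf_le_left
    have hub : S.le (bullet x (S.circ x y)) x := by
      refine hj.2.2 x (le_refl S x) ?_
      rw [hm]; exact S.zero_le x
    exact (le_antisymm S hub hj.1.1).symm
  · -- x = (y ∘ x) • x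
    intro x y
    have hj := hb (S.circ y x) x
    have hw : S.le (S.circ y x) x := res_le S x _ inf_le_right
    have hmx : S.le (S.minus x (S.circ y x)) x := res_le S x _ sdiff_le
    have hub : S.le (bullet (S.circ y x) x) x := hj.2.2 x hw hmx
    have hpj : S.p (bullet (S.circ y x) x) = S.p x := by
      rw [join_p S hj, p_minus S, p_circ S]
      exact sup_sdiff_cancel_right inf_le_right
    exact (le_antisymm S hub hpj.ge).symm
end

section
/- Every Boolean set X → B, equipped with the operations x ∘ y = y|^{p(y)}_{p(x)∧p(y)} and x • y = x ∨ (y \ x), is a right-hand skew Boolean algebra. -/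
namespace BooleanSet

variable {B : Type*} [GeneralizedBooleanAlgebra B] (S : BooleanSet B)

lemma res_index_congr (x : S.X) {a b : B} (h : a = b) (ha : a ≤ S.p x) :
    S.res x a ha = S.res x b (h ▸ ha) := by subst h; rfl

lemma res_elem_congr {x y : S.X} (h : x = y) (a : B) (ha : a ≤ S.p x) (ha' : a ≤ S.p y) :
    S.res x a ha = S.res y a ha' := by subst h; rfl

lemma res_full (x : S.X) {a : B} (h : a = S.p x) (ha : a ≤ S.p x) : S.res x a ha = x := by
  subst h; exact S.res_self x

lemma lle_refl (x : S.X) : S.le x x := ⟨le_rfl, (S.res_self x).symm⟩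

lemma res_le (x : S.X) (a : B) (ha : a ≤ S.p x) : S.le (S.res x a ha) x :=
  ⟨(S.p_res x a ha).le.trans ha,
    (S.res_index_congr x (S.p_res x a ha) _).symm⟩

lemma res_of_le {w u : S.X} (h : S.le w u) (a : B) (ha : a ≤ S.p w) (ha' : a ≤ S.p u) :
    S.res u a ha' = S.res w a ha := by
  obtain ⟨hp, hw⟩ := h
  calc S.res u a ha' = S.res (S.res u (S.p w) hp) a
        (by rw [S.p_res]; exact ha) :=
        (S.res_comp u (S.p w) a hp ha ha' _).symm
    _ = S.res w a ha := S.res_elem_congr hw.symm a _ ha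

lemma lle_trans {x y z : S.X} (h1 : S.le x y) (h2 : S.le y z) : S.le x z := by
  exact ⟨h1.1.trans h2.1,
    h1.2.trans (S.res_of_le h2 (S.p x) h1.1 (h1.1.trans h2.1)).symm⟩

lemma eq_of_le_of_p_eq {x y : S.X} (h : S.le x y) (hp : S.p x = S.p y) : x = y := by
  rw [h.2, S.res_index_congr y hp]
  exact S.res_self y

lemma lle_antisymm {x y : S.X} (h1 : S.le x y) (h2 : S.le y x) : x = y :=
  S.eq_of_le_of_p_eq h1 (le_antisymm h1.1 h2.1)

lemma le_intro {m y : S.X} (a : B) (ha : a ≤ S.p y) (hpm : S.p m = a)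
    (h : m = S.res y a ha) : S.le m y :=
  ⟨hpm.le.trans ha, h.trans (S.res_index_congr y hpm (hpm.le.trans ha)).symm⟩

lemma le_res_of {x u : S.X} (a : B) (ha : a ≤ S.p u) (hxu : S.le x u) (hpa : S.p x ≤ a) :
    S.le x (S.res u a ha) := by
  refine S.le_intro (S.p x) (by rw [S.p_res]; exact hpa) rfl ?_
  exact hxu.2.trans (S.res_comp u a (S.p x) ha hpa hxu.1
    (by rw [S.p_res]; exact hpa)).symm

lemma p_zero : S.p S.zero = ⊥ := by
  obtain ⟨x0, hx0⟩ := S.p_surj ⊥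
  exact le_bot_iff.mp (hx0 ▸ (S.zero_le x0).1)

lemma IsJoin_p_eq {j x y : S.X} (h : S.IsJoin j x y) : S.p j = S.p x ⊔ S.p y := by
  obtain ⟨hx, hy, hmin⟩ := h
  have hs : S.p x ⊔ S.p y ≤ S.p j := sup_le hx.1 hy.1
  have hj := hmin (S.res j (S.p x ⊔ S.p y) hs)
    (S.le_res_of _ hs hx le_sup_left)
    (S.le_res_of _ hs hy le_sup_right)
  exact le_antisymm (hj.1.trans (S.p_res j _ hs).le) hs

lemma IsJoin_unique {j j' x y : S.X} (h : S.IsJoin j x y) (h' : S.IsJoin j' x y) : j = j' :=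
  S.lle_antisymm (h.2.2 j' h'.1 h'.2.1) (h'.2.2 j h.1 h.2.1)

lemma compatible_res (u : S.X) (a b : B) (ha : a ≤ S.p u) (hb : b ≤ S.p u) :
    S.Compatible (S.res u a ha) (S.res u b hb) := by
  refine ⟨S.res u (a ⊓ b) (inf_le_left.trans ha), ⟨?_, ?_, ?_⟩, ?_⟩
  · exact S.le_res_of a ha (S.res_le u _ _) (by rw [S.p_res]; exact inf_le_left)
  · exact S.le_res_of b hb (S.res_le u _ _) (by rw [S.p_res]; exact inf_le_right)
  · intro z hz1 hz2
    have hzu : S.le z u := S.lle_trans hz1 (S.res_le u a ha)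
    have hpz : S.p z ≤ a ⊓ b :=
      le_inf (hz1.1.trans (S.p_res u a ha).le) (hz2.1.trans (S.p_res u b hb).le)
    exact S.le_res_of (a ⊓ b) _ hzu hpz
  · rw [S.p_res, S.p_res, S.p_res]

lemma glue {u v : S.X} (a b : B) (ha : a ≤ S.p u) (hb : b ≤ S.p u)
    (hab : a ⊔ b = S.p u) (hpv : S.p v = S.p u)
    (ha' : a ≤ S.p v) (hb' : b ≤ S.p v)
    (h1 : S.res u a ha = S.res v a ha') (h2 : S.res u b hb = S.res v b hb') : u = v := by
  obtain ⟨j, hj⟩ := S.join_exists _ _ (S.compatible_res u a b ha hb)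
  have hpj : S.p j = a ⊔ b := by
    rw [S.IsJoin_p_eq hj, S.p_res, S.p_res]
  have hju : S.le j u := hj.2.2 u (S.res_le u a ha) (S.res_le u b hb)
  have hjv : S.le j v := hj.2.2 v (h1 ▸ S.res_le v a ha') (h2 ▸ S.res_le v b hb')
  rw [← S.eq_of_le_of_p_eq hju (hpj.trans hab),
      ← S.eq_of_le_of_p_eq hjv (hpj.trans (hab.trans hpv.symm))]

lemma glue3 {u v : S.X} (a b c : B) (ha : a ≤ S.p u) (hb : b ≤ S.p u) (hc : c ≤ S.p u)
    (habc : a ⊔ b ⊔ c = S.p u) (hpv : S.p v = S.p u)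
    (ha' : a ≤ S.p v) (hb' : b ≤ S.p v) (hc' : c ≤ S.p v)
    (h1 : S.res u a ha = S.res v a ha') (h2 : S.res u b hb = S.res v b hb')
    (h3 : S.res u c hc = S.res v c hc') : u = v := by
  have hbc : b ⊔ c ≤ S.p u := sup_le hb hc
  have hbc' : b ⊔ c ≤ S.p v := sup_le hb' hc'
  refine S.glue a (b ⊔ c) ha hbc (by rw [← sup_assoc]; exact habc) hpv ha' hbc' h1 ?_
  refine S.glue b c (by rw [S.p_res]; exact le_sup_left) (by rw [S.p_res]; exact le_sup_right)
    (by rw [S.p_res]) (by rw [S.p_res, S.p_res])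
    (by rw [S.p_res]; exact le_sup_left) (by rw [S.p_res]; exact le_sup_right) ?_ ?_
  · calc S.res (S.res u (b ⊔ c) hbc) b (by rw [S.p_res]; exact le_sup_left)
        = S.res u b hb := S.res_comp u _ b hbc le_sup_left hb _
      _ = S.res v b hb' := h2
      _ = S.res (S.res v (b ⊔ c) hbc') b (by rw [S.p_res]; exact le_sup_left) :=
        (S.res_comp v _ b hbc' le_sup_left hb' _).symm
  · calc S.res (S.res u (b ⊔ c) hbc) c (by rw [S.p_res]; exact le_sup_right)
        = S.res u c hc := S.res_comp u _ c hbc le_sup_right hc _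
      _ = S.res v c hc' := h3
      _ = S.res (S.res v (b ⊔ c) hbc') c (by rw [S.p_res]; exact le_sup_right) :=
        (S.res_comp v _ c hbc' le_sup_right hc' _).symm

lemma p_minus (y x : S.X) : S.p (S.minus y x) = S.p y \ S.p x := S.p_res y _ _

lemma minus_le (y x : S.X) : S.le (S.minus y x) y := S.res_le y _ _

lemma compatible_minus (x y : S.X) : S.Compatible x (S.minus y x) := by
  refine ⟨S.zero, ⟨S.zero_le x, S.zero_le _, ?_⟩, ?_⟩
  · intro z h1 h2
    have : S.p z = ⊥ := le_bot_iff.mp (by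
      have := le_inf h1.1 (h2.1.trans (S.p_minus y x).le)
      rwa [inf_sdiff_self_right] at this)
    rw [S.eq_zero z this]
    exact S.lle_refl _
  · rw [S.p_zero, S.p_minus, inf_sdiff_self_right]

noncomputable def bullet (x y : S.X) : S.X :=
  (S.join_exists x (S.minus y x) (S.compatible_minus x y)).choose

lemma bullet_isJoin (x y : S.X) : S.IsJoin (S.bullet x y) x (S.minus y x) :=
  (S.join_exists x (S.minus y x) (S.compatible_minus x y)).choose_spec

lemma p_bullet (x y : S.X) : S.p (S.bullet x y) = S.p x ⊔ S.p y := by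
  rw [S.IsJoin_p_eq (S.bullet_isJoin x y), S.p_minus, sup_sdiff_self]

lemma le_bullet_left (x y : S.X) : S.le x (S.bullet x y) := (S.bullet_isJoin x y).1

lemma minus_le_bullet (x y : S.X) : S.le (S.minus y x) (S.bullet x y) :=
  (S.bullet_isJoin x y).2.1

lemma px_le_bullet (x y : S.X) : S.p x ≤ S.p (S.bullet x y) := (S.le_bullet_left x y).1

lemma res_bullet_left (x y : S.X) (h : S.p x ≤ S.p (S.bullet x y)) :
    S.res (S.bullet x y) (S.p x) h = x := (S.le_bullet_left x y).2.symm

lemma res_bullet_sdiff (x y : S.X) (h : S.p y \ S.p x ≤ S.p (S.bullet x y)) :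
    S.res (S.bullet x y) (S.p y \ S.p x) h = S.minus y x := by
  have h2 := (S.minus_le_bullet x y).2
  refine Eq.symm (h2.trans ?_)
  exact S.res_index_congr _ (S.p_minus y x) _

lemma res_of_le' {w u : S.X} (h : S.le w u) {a : B} (ha : a ≤ S.p w) :
    S.res u a (ha.trans h.1) = S.res w a ha := S.res_of_le h a ha _

lemma p_circ (x y : S.X) : S.p (S.circ x y) = S.p x ⊓ S.p y := S.p_res y _ _

lemma circ_le (x y : S.X) : S.le (S.circ x y) y := S.res_le y _ _

lemma bullet_eq_of {x y : S.X} (t : S.X) (hpt : S.p t = S.p x ⊔ S.p y)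
    (h1' : S.p x ≤ S.p t) (h2' : S.p y \ S.p x ≤ S.p t)
    (h1 : S.res t (S.p x) h1' = x) (h2 : S.res t (S.p y \ S.p x) h2' = S.minus y x) :
    S.bullet x y = t := by
  refine S.glue (S.p x) (S.p y \ S.p x) (S.px_le_bullet x y)
    (by rw [S.p_bullet]; exact sdiff_le.trans le_sup_right)
    (by rw [S.p_bullet, sup_sdiff_self]) (by rw [hpt, S.p_bullet]) h1' h2' ?_ ?_
  · rw [S.res_bullet_left, h1]
  · rw [S.res_bullet_sdiff, h2]

lemma bullet_res {x y z : S.X} (hy : S.le y x) (hz : S.le z x)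
    (h : S.p y ⊔ S.p z ≤ S.p x) :
    S.bullet y z = S.res x (S.p y ⊔ S.p z) h := by
  refine S.bullet_eq_of _ (S.p_res x _ h)
    (by rw [S.p_res]; exact le_sup_left)
    (by rw [S.p_res]; exact sdiff_le.trans le_sup_right) ?_ ?_
  · exact (S.res_comp x _ _ h le_sup_left (le_sup_left.trans h) _).trans hy.2.symm
  · refine (S.res_comp x _ _ h (sdiff_le.trans le_sup_right)
      ((sdiff_le.trans le_sup_right).trans h) _).trans ?_
    exact S.res_of_le hz _ sdiff_le _

lemma bullet_eq_left {x w : S.X} (h : S.p w ≤ S.p x) : S.bullet x w = x := by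
  have hm : S.minus w x = S.zero :=
    S.eq_zero _ (by rw [S.p_minus, sdiff_eq_bot_iff]; exact h)
  refine S.IsJoin_unique (S.bullet_isJoin x w) ?_
  rw [hm]
  exact ⟨S.lle_refl x, S.zero_le x, fun z h1 _ => h1⟩

lemma isJoin_bullet_of_common {x y z : S.X} (hy : S.le y x) (hz : S.le z x) :
    S.IsJoin (S.bullet y z) y z := by
  have hsup : S.p y ⊔ S.p z ≤ S.p x := sup_le hy.1 hz.1
  have hb := S.bullet_res hy hz hsup
  refine ⟨S.le_bullet_left y z, ?_, ?_⟩
  · rw [hb]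
    exact S.le_res_of _ hsup hz le_sup_right
  · intro w h1 h2
    have hpw : S.p y ⊔ S.p z ≤ S.p w := sup_le h1.1 h2.1
    refine S.le_intro (S.p y ⊔ S.p z) hpw (by rw [hb, S.p_res]) ?_
    rw [hb]
    refine S.glue (S.p y) (S.p z \ S.p y)
      (by rw [S.p_res]; exact le_sup_left)
      (by rw [S.p_res]; exact sdiff_le.trans le_sup_right)
      (by rw [S.p_res, sup_sdiff_self])
      (by rw [S.p_res, S.p_res])
      (by rw [S.p_res]; exact le_sup_left)
      (by rw [S.p_res]; exact sdiff_le.trans le_sup_right) ?_ ?_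
    · calc S.res (S.res x _ hsup) (S.p y) _
          = S.res x (S.p y) (le_sup_left.trans hsup) := S.res_comp x _ _ hsup le_sup_left _ _
        _ = y := hy.2.symm
        _ = S.res w (S.p y) (le_sup_left.trans hpw) := h1.2
        _ = S.res (S.res w _ hpw) (S.p y) _ := (S.res_comp w _ _ hpw le_sup_left _ _).symm
    · calc S.res (S.res x _ hsup) (S.p z \ S.p y) _
          = S.res x (S.p z \ S.p y) ((sdiff_le.trans le_sup_right).trans hsup) :=
            S.res_comp x _ _ hsup (sdiff_le.trans le_sup_right) _ _
        _ = S.res z (S.p z \ S.p y) sdiff_le := S.res_of_le hz _ sdiff_le _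
        _ = S.res w (S.p z \ S.p y) ((sdiff_le.trans le_sup_right).trans hpw) :=
            (S.res_of_le h2 _ sdiff_le _).symm
        _ = S.res (S.res w _ hpw) (S.p z \ S.p y) _ :=
            (S.res_comp w _ _ hpw (sdiff_le.trans le_sup_right) _ _).symm

lemma isMeet_circ {x y z : S.X} (hy : S.le y x) (hz : S.le z x) :
    S.IsMeet (S.circ y z) y z := by
  have hmz : S.le (S.circ y z) z := S.res_le z _ _
  have key : S.circ y z = S.res y (S.p y ⊓ S.p z) inf_le_left := by
    calc S.circ y z = S.res x (S.p y ⊓ S.p z) (inf_le_right.trans hz.1) :=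
          (S.res_of_le hz _ inf_le_right _).symm
      _ = S.res y _ inf_le_left := S.res_of_le hy _ inf_le_left _
  refine ⟨?_, hmz, ?_⟩
  · rw [key]; exact S.res_le y _ _
  · intro w h1 h2
    have hpw : S.p w ≤ S.p y ⊓ S.p z := le_inf h1.1 h2.1
    have ha : S.p w ≤ S.p (S.circ y z) := by rw [S.p_circ]; exact hpw
    exact S.le_intro (S.p w) ha rfl (h2.2.trans (S.res_of_le hmz (S.p w) ha _))

lemma mem_down_iff {x y : S.X} : (∃ s, y = S.circ (S.circ x s) x) ↔ S.le y x := by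
  constructor
  · rintro ⟨s, rfl⟩; exact S.res_le x _ _
  · intro h
    have e : S.p (S.circ x y) ⊓ S.p x = S.p y := by
      rw [S.p_circ, inf_eq_right.mpr h.1, inf_eq_left.mpr h.1]
    exact ⟨y, h.2.trans (S.res_index_congr x e.symm h.1)⟩

lemma circ_idem (x : S.X) : S.circ x x = x := S.res_full x (inf_idem _) inf_le_right

lemma circ_assoc (x y z : S.X) : S.circ (S.circ x y) z = S.circ x (S.circ y z) := by
  have e1 : S.p (S.circ x y) ⊓ S.p z = S.p x ⊓ S.p (S.circ y z) := by
    rw [S.p_circ, S.p_circ, inf_assoc]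
  calc S.circ (S.circ x y) z
      = S.res z (S.p x ⊓ S.p (S.circ y z))
        (by rw [S.p_circ]; exact inf_le_right.trans inf_le_right) :=
        S.res_index_congr z e1 inf_le_right
    _ = S.circ x (S.circ y z) :=
        (S.res_comp z (S.p y ⊓ S.p z) _ inf_le_right
          (by rw [S.p_res]; exact inf_le_right)
          (by rw [S.p_res]; exact inf_le_right.trans inf_le_right) inf_le_right).symm

lemma circ_bullet (x y : S.X) : S.circ x (S.bullet x y) = x := by
  have e : S.p x ⊓ S.p (S.bullet x y) = S.p x := inf_eq_left.mpr (S.px_le_bullet x y)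
  exact (S.res_index_congr _ e inf_le_right).trans (S.res_bullet_left x y _)

lemma bullet_circ (x y : S.X) : S.circ (S.bullet y x) x = x := by
  have e : S.p (S.bullet y x) ⊓ S.p x = S.p x :=
    inf_eq_right.mpr (by rw [S.p_bullet]; exact le_sup_right)
  exact S.res_full x e inf_le_right

lemma bullet_circ_right (x y : S.X) : S.bullet x (S.circ x y) = x :=
  S.bullet_eq_left (by rw [S.p_circ]; exact inf_le_left)

lemma bullet_circ_left (x y : S.X) : S.bullet (S.circ y x) x = x := by
  have h : S.p (S.circ y x) ⊔ S.p x ≤ S.p x := by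
    rw [S.p_circ]; exact sup_le inf_le_right le_rfl
  rw [S.bullet_res (S.circ_le y x) (S.lle_refl x) h]
  exact S.res_full x (by rw [S.p_circ]; exact sup_eq_right.mpr inf_le_right) h

lemma circ_sb2 (x y : S.X) : S.circ (S.circ x y) x = S.circ y x := by
  have e : S.p (S.circ x y) ⊓ S.p x = S.p y ⊓ S.p x := by
    rw [S.p_circ, inf_comm (S.p x) (S.p y), inf_assoc, inf_idem]
  exact S.res_index_congr x e inf_le_right

lemma bullet_sb2 (x y : S.X) : S.bullet (S.bullet x y) x = S.bullet x y :=
  S.bullet_eq_left (S.px_le_bullet x y)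

lemma bullet_assoc (x y z : S.X) :
    S.bullet (S.bullet x y) z = S.bullet x (S.bullet y z) := by
  have hpu : S.p (S.bullet (S.bullet x y) z) = S.p x ⊔ S.p y ⊔ S.p z := by
    rw [S.p_bullet, S.p_bullet]
  have hpv : S.p (S.bullet x (S.bullet y z)) = S.p x ⊔ (S.p y ⊔ S.p z) := by
    rw [S.p_bullet, S.p_bullet]
  refine S.glue3 (S.p x) (S.p y \ S.p x) (S.p z \ (S.p x ⊔ S.p y))
    (by rw [hpu]; exact le_sup_left.trans le_sup_left)
    (by rw [hpu]; exact (sdiff_le.trans le_sup_right).trans le_sup_left)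
    (by rw [hpu]; exact sdiff_le.trans le_sup_right)
    (by rw [hpu, sup_sdiff_self, sup_sdiff_self])
    (by rw [hpu, hpv, sup_assoc])
    (by rw [hpv]; exact le_sup_left)
    (by rw [hpv]; exact sdiff_le.trans (le_sup_left.trans le_sup_right))
    (by rw [hpv]; exact sdiff_le.trans (le_sup_right.trans le_sup_right))
    ?_ ?_ ?_
  · calc S.res (S.bullet (S.bullet x y) z) (S.p x) _
        = S.res (S.bullet x y) (S.p x) (S.px_le_bullet x y) :=
          S.res_of_le (S.le_bullet_left _ z) _ _ _
      _ = x := S.res_bullet_left x y _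
      _ = S.res (S.bullet x (S.bullet y z)) (S.p x) _ :=
          (S.res_bullet_left x (S.bullet y z) (S.px_le_bullet _ _)).symm
  · have hb1 : S.p y \ S.p x ≤ S.p (S.bullet x y) := by
      rw [S.p_bullet]; exact sdiff_le.trans le_sup_right
    have hb2 : S.p y \ S.p x ≤ S.p (S.minus (S.bullet y z) x) := by
      rw [S.p_minus, S.p_bullet]; exact sdiff_le_sdiff le_sup_left le_rfl
    have hb3 : S.p y \ S.p x ≤ S.p (S.bullet y z) := by
      rw [S.p_bullet]; exact sdiff_le.trans le_sup_left
    calc S.res (S.bullet (S.bullet x y) z) (S.p y \ S.p x) _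
        = S.res (S.bullet x y) (S.p y \ S.p x) hb1 :=
          S.res_of_le (S.le_bullet_left _ z) _ hb1 _
      _ = S.minus y x := S.res_bullet_sdiff x y hb1
      _ = S.res y (S.p y \ S.p x) sdiff_le := rfl
      _ = S.res (S.bullet y z) (S.p y \ S.p x) hb3 :=
          (S.res_of_le (S.le_bullet_left y z) _ sdiff_le hb3).symm
      _ = S.res (S.minus (S.bullet y z) x) (S.p y \ S.p x) hb2 :=
          S.res_of_le (S.minus_le (S.bullet y z) x) _ hb2 hb3
      _ = S.res (S.bullet x (S.bullet y z)) (S.p y \ S.p x) _ :=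
          (S.res_of_le (S.minus_le_bullet x (S.bullet y z)) _ hb2 _).symm
  · have hc0 : S.p z \ (S.p x ⊔ S.p y) ≤ S.p z := sdiff_le
    have hc1 : S.p z \ (S.p x ⊔ S.p y) ≤ S.p (S.minus z (S.bullet x y)) := by
      rw [S.p_minus, S.p_bullet]
    have hc2 : S.p z \ (S.p x ⊔ S.p y) ≤ S.p (S.minus z y) := by
      rw [S.p_minus]; exact sdiff_le_sdiff le_rfl le_sup_right
    have hc3 : S.p z \ (S.p x ⊔ S.p y) ≤ S.p (S.bullet y z) := by
      rw [S.p_bullet]; exact sdiff_le.trans le_sup_right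
    have hc4 : S.p z \ (S.p x ⊔ S.p y) ≤ S.p (S.minus (S.bullet y z) x) := by
      rw [S.p_minus, S.p_bullet]; exact sdiff_le_sdiff le_sup_right le_sup_left
    calc S.res (S.bullet (S.bullet x y) z) (S.p z \ (S.p x ⊔ S.p y)) _
        = S.res (S.minus z (S.bullet x y)) (S.p z \ (S.p x ⊔ S.p y)) hc1 :=
          S.res_of_le (S.minus_le_bullet (S.bullet x y) z) _ hc1 _
      _ = S.res z (S.p z \ (S.p x ⊔ S.p y)) hc0 :=
          S.res_of_le (S.minus_le z (S.bullet x y)) _ hc1 hc0 |>.symm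
      _ = S.res (S.minus z y) (S.p z \ (S.p x ⊔ S.p y)) hc2 :=
          S.res_of_le (S.minus_le z y) _ hc2 hc0
      _ = S.res (S.bullet y z) (S.p z \ (S.p x ⊔ S.p y)) hc3 := by
          have := S.res_of_le (S.minus_le_bullet y z) (S.p z \ (S.p x ⊔ S.p y)) hc2 hc3
          exact this.symm
      _ = S.res (S.minus (S.bullet y z) x) (S.p z \ (S.p x ⊔ S.p y)) hc4 :=
          S.res_of_le (S.minus_le (S.bullet y z) x) _ hc4 hc3
      _ = S.res (S.bullet x (S.bullet y z)) (S.p z \ (S.p x ⊔ S.p y)) _ :=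
          (S.res_of_le (S.minus_le_bullet x (S.bullet y z)) _ hc4 _).symm

lemma bullet_idem (x : S.X) : S.bullet x x = x := S.bullet_eq_left le_rfl

lemma sb3 (x y : S.X) : S.bullet x y = S.bullet y x ↔ S.circ x y = S.circ y x := by
  constructor
  · intro h
    have hy : S.le y (S.bullet x y) := h ▸ S.le_bullet_left y x
    have hx : S.le x (S.bullet x y) := S.le_bullet_left x y
    have e : S.p x ⊓ S.p y ≤ S.p (S.bullet x y) := by
      rw [S.p_bullet]; exact inf_le_left.trans le_sup_left
    have e' : S.p y ⊓ S.p x ≤ S.p (S.bullet x y) := by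
      rw [S.p_bullet]; exact inf_le_right.trans le_sup_left
    calc S.circ x y = S.res (S.bullet x y) (S.p x ⊓ S.p y) e :=
          (S.res_of_le hy _ inf_le_right e).symm
      _ = S.res (S.bullet x y) (S.p y ⊓ S.p x) e' :=
          S.res_index_congr _ (inf_comm _ _) e
      _ = S.circ y x := S.res_of_le hx _ inf_le_right e'
  · intro h
    have hpu : S.p (S.bullet x y) = S.p x ⊔ S.p y := S.p_bullet x y
    have hpv : S.p (S.bullet y x) = S.p y ⊔ S.p x := S.p_bullet y x
    refine S.glue3 (S.p x ⊓ S.p y) (S.p x \ S.p y) (S.p y \ S.p x)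
      (by rw [hpu]; exact inf_le_left.trans le_sup_left)
      (by rw [hpu]; exact sdiff_le.trans le_sup_left)
      (by rw [hpu]; exact sdiff_le.trans le_sup_right)
      (by rw [hpu, sup_inf_sdiff, sup_sdiff_self])
      (by rw [hpu, hpv, sup_comm])
      (by rw [hpv]; exact inf_le_right.trans le_sup_left)
      (by rw [hpv]; exact sdiff_le.trans le_sup_right)
      (by rw [hpv]; exact sdiff_le.trans le_sup_left)
      ?_ ?_ ?_
    · have e1 : S.p x ⊓ S.p y ≤ S.p (S.bullet x y) := by
        rw [hpu]; exact inf_le_left.trans le_sup_left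
      have e2 : S.p x ⊓ S.p y ≤ S.p (S.bullet y x) := by
        rw [hpv]; exact inf_le_right.trans le_sup_left
      have e3 : S.p x ⊓ S.p y ≤ S.p x := inf_le_left
      calc S.res (S.bullet x y) (S.p x ⊓ S.p y) _
          = S.res x (S.p x ⊓ S.p y) e3 := S.res_of_le (S.le_bullet_left x y) _ e3 e1
        _ = S.res x (S.p y ⊓ S.p x) inf_le_right := S.res_index_congr x (inf_comm _ _) e3
        _ = S.circ y x := rfl
        _ = S.circ x y := h.symm
        _ = S.res y (S.p x ⊓ S.p y) inf_le_right := rfl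
        _ = S.res (S.bullet y x) (S.p x ⊓ S.p y) _ :=
            (S.res_of_le (S.le_bullet_left y x) _ inf_le_right e2).symm
    · have e1 : S.p x \ S.p y ≤ S.p (S.bullet x y) := by
        rw [hpu]; exact sdiff_le.trans le_sup_left
      calc S.res (S.bullet x y) (S.p x \ S.p y) _
          = S.res x (S.p x \ S.p y) sdiff_le := S.res_of_le (S.le_bullet_left x y) _ sdiff_le e1
        _ = S.minus x y := rfl
        _ = S.res (S.bullet y x) (S.p x \ S.p y) _ := (S.res_bullet_sdiff y x _).symm
    · have e2 : S.p y \ S.p x ≤ S.p (S.bullet y x) := by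
        rw [hpv]; exact sdiff_le.trans le_sup_left
      calc S.res (S.bullet x y) (S.p y \ S.p x) _
          = S.minus y x := S.res_bullet_sdiff x y _
        _ = S.res y (S.p y \ S.p x) sdiff_le := rfl
        _ = S.res (S.bullet y x) (S.p y \ S.p x) _ :=
            (S.res_of_le (S.le_bullet_left y x) _ sdiff_le e2).symm

lemma circ_zero_left (x : S.X) : S.circ S.zero x = S.zero :=
  S.eq_zero _ (by rw [S.p_circ, S.p_zero, bot_inf_eq])

lemma circ_zero_right (x : S.X) : S.circ x S.zero = S.zero :=
  S.eq_zero _ (by rw [S.p_circ, S.p_zero, inf_bot_eq])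

lemma circ_distrib {x y z w : S.X} (hy : S.le y x) (hz : S.le z x) (hw : S.le w x) :
    S.circ y (S.bullet z w) = S.bullet (S.circ y z) (S.circ y w) := by
  have hsup : S.p z ⊔ S.p w ≤ S.p x := sup_le hz.1 hw.1
  have hb := S.bullet_res hz hw hsup
  have hbzw : S.le (S.bullet z w) x := by rw [hb]; exact S.res_le x _ _
  have hA' : S.p y ⊓ (S.p z ⊔ S.p w) ≤ S.p x := inf_le_right.trans hsup
  have hA : S.p y ⊓ (S.p z ⊔ S.p w) ≤ S.p (S.bullet z w) := by
    rw [S.p_bullet]; exact inf_le_right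
  have hyz : S.circ y z = S.res x (S.p y ⊓ S.p z) (inf_le_right.trans hz.1) :=
    (S.res_of_le hz _ inf_le_right _).symm
  have hyw : S.circ y w = S.res x (S.p y ⊓ S.p w) (inf_le_right.trans hw.1) :=
    (S.res_of_le hw _ inf_le_right _).symm
  have lhs : S.circ y (S.bullet z w) = S.res x (S.p y ⊓ (S.p z ⊔ S.p w)) hA' := by
    refine (S.res_index_congr _ (by rw [S.p_bullet] :
      S.p y ⊓ S.p (S.bullet z w) = S.p y ⊓ (S.p z ⊔ S.p w)) inf_le_right).trans ?_
    exact (S.res_of_le hbzw _ hA hA').symm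
  have hss : S.p (S.res x (S.p y ⊓ S.p z) (inf_le_right.trans hz.1)) ⊔
      S.p (S.res x (S.p y ⊓ S.p w) (inf_le_right.trans hw.1)) ≤ S.p x := by
    rw [S.p_res, S.p_res]
    exact sup_le (inf_le_right.trans hz.1) (inf_le_right.trans hw.1)
  have rhs : S.bullet (S.circ y z) (S.circ y w) =
      S.res x (S.p y ⊓ S.p z ⊔ S.p y ⊓ S.p w)
        (sup_le (inf_le_right.trans hz.1) (inf_le_right.trans hw.1)) := by
    rw [hyz, hyw, S.bullet_res (S.res_le x _ _) (S.res_le x _ _) hss]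
    exact S.res_index_congr x (by rw [S.p_res, S.p_res]) _
  rw [lhs, rhs]
  exact S.res_index_congr x (inf_sup_left _ _ _) hA'

lemma complement {x y : S.X} (hy : S.le y x) :
    S.circ y (S.minus x y) = S.zero ∧ S.circ (S.minus x y) y = S.zero ∧
    S.bullet y (S.minus x y) = x := by
  refine ⟨S.eq_zero _ ?_, S.eq_zero _ ?_, ?_⟩
  · rw [S.p_circ, S.p_minus, inf_sdiff_self_right]
  · rw [S.p_circ, S.p_minus, inf_sdiff_self_left]
  · have h : S.p y ⊔ S.p (S.minus x y) ≤ S.p x := by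
      rw [S.p_minus]; exact sup_le hy.1 sdiff_le
    rw [S.bullet_res hy (S.minus_le x y) h]
    exact S.res_full x (by rw [S.p_minus]; exact sup_sdiff_cancel' le_rfl hy.1) h

end BooleanSet

/-- Every Boolean set, equipped with `x ∘ y = y|^{p y}_{p x ⊓ p y}` and
`x • y = x ∨ (y \ x)`, is a right-hand skew Boolean algebra: both operations are bands,
the axioms (SB1)–(SB4) hold, and each downset `x↓ = {x ∘ s ∘ x}` is a unital Boolean
algebra (a bounded distributive lattice, with meets given by `∘`, joins by `•`, bottom
`0`, top `x`, in which every element has a complement). -/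
theorem booleanSet_is_right_skew_boolean_algebra {B : Type*} [GeneralizedBooleanAlgebra B]
    (S : BooleanSet B) :
    ∃ bullet : S.X → S.X → S.X,
      (∀ x y, S.IsJoin (bullet x y) x (S.minus y x)) ∧
      -- (X, ∘) and (X, •) are bands
      (∀ x, S.circ x x = x) ∧
      (∀ x y z, S.circ (S.circ x y) z = S.circ x (S.circ y z)) ∧
      (∀ x, bullet x x = x) ∧
      (∀ x y z, bullet (bullet x y) z = bullet x (bullet y z)) ∧
      -- (SB1)
      (∀ x y, S.circ x (bullet x y) = x) ∧
      (∀ x y, S.circ (bullet y x) x = x) ∧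
      (∀ x y, bullet x (S.circ x y) = x) ∧
      (∀ x y, bullet (S.circ y x) x = x) ∧
      -- (SB2)
      (∀ x y, S.circ (S.circ x y) x = S.circ y x) ∧
      (∀ x y, bullet (bullet x y) x = bullet x y) ∧
      -- (SB3)
      (∀ x y, bullet x y = bullet y x ↔ S.circ x y = S.circ y x) ∧
      -- (SB4)
      (∀ x, S.circ S.zero x = S.zero ∧ S.circ x S.zero = S.zero) ∧
      -- (SB5): each x↓ = {x ∘ s ∘ x : s} is a unital Boolean algebra
      (∀ x : S.X,
        (∀ y ∈ {y | ∃ s, y = S.circ (S.circ x s) x}, S.le S.zero y ∧ S.le y x) ∧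
        (∀ y ∈ {y | ∃ s, y = S.circ (S.circ x s) x},
         ∀ z ∈ {y | ∃ s, y = S.circ (S.circ x s) x},
          (∃ s, S.circ y z = S.circ (S.circ x s) x) ∧ S.IsMeet (S.circ y z) y z ∧
          (∃ s, bullet y z = S.circ (S.circ x s) x) ∧ S.IsJoin (bullet y z) y z) ∧
        (∀ y ∈ {y | ∃ s, y = S.circ (S.circ x s) x},
         ∀ z ∈ {y | ∃ s, y = S.circ (S.circ x s) x},
         ∀ w ∈ {y | ∃ s, y = S.circ (S.circ x s) x},
          S.circ y (bullet z w) = bullet (S.circ y z) (S.circ y w)) ∧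
        (∀ y ∈ {y | ∃ s, y = S.circ (S.circ x s) x},
          ∃ y' ∈ {y | ∃ s, y = S.circ (S.circ x s) x},
            S.circ y y' = S.zero ∧ S.circ y' y = S.zero ∧ bullet y y' = x)) := by
  refine ⟨S.bullet, S.bullet_isJoin, S.circ_idem, S.circ_assoc,
    S.bullet_idem, S.bullet_assoc,
    S.circ_bullet, S.bullet_circ, S.bullet_circ_right, S.bullet_circ_left,
    S.circ_sb2, S.bullet_sb2, S.sb3,
    fun x => ⟨S.circ_zero_left x, S.circ_zero_right x⟩, ?_⟩
  intro x
  refine ⟨?_, ?_, ?_, ?_⟩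
  · intro y hy
    exact ⟨S.zero_le y, S.mem_down_iff.mp hy⟩
  · intro y hy z hz
    have hy' := S.mem_down_iff.mp hy
    have hz' := S.mem_down_iff.mp hz
    refine ⟨S.mem_down_iff.mpr (S.lle_trans (S.circ_le y z) hz'), S.isMeet_circ hy' hz',
      S.mem_down_iff.mpr ?_, S.isJoin_bullet_of_common hy' hz'⟩
    rw [S.bullet_res hy' hz' (sup_le hy'.1 hz'.1)]
    exact S.res_le x _ _
  · intro y hy z hz w hw
    exact S.circ_distrib (S.mem_down_iff.mp hy) (S.mem_down_iff.mp hz) (S.mem_down_iff.mp hw)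
  · intro y hy
    have hy' := S.mem_down_iff.mp hy
    obtain ⟨c1, c2, c3⟩ := S.complement hy'
    exact ⟨S.minus x y, S.mem_down_iff.mpr (S.minus_le x y), c1, c2, c3⟩
end

section
/- In a right-hand skew Boolean algebra, x • y = x ∨ (y \ x), where ∨ is the join with respect to the natural partial order (x ≤ y iff x = x ∘ y) and y \ x is the relative complement of x ∘ y in the unital Boolean algebra y↓ = {y ∘ s ∘ y : s}. -/
/-- The band and (SB1)–(SB4) axioms of a right-hand skew Boolean algebra. -/
structure PreSkewBA where
  X : Type*
  circ : X → X → X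
  bullet : X → X → X
  zero : X
  circ_idem : ∀ x, circ x x = x
  circ_assoc : ∀ x y z, circ (circ x y) z = circ x (circ y z)
  bullet_idem : ∀ x, bullet x x = x
  bullet_assoc : ∀ x y z, bullet (bullet x y) z = bullet x (bullet y z)
  sb1a : ∀ x y, circ x (bullet x y) = x
  sb1b : ∀ x y, circ (bullet y x) x = x
  sb1c : ∀ x y, bullet x (circ x y) = x
  sb1d : ∀ x y, bullet (circ y x) x = x
  sb2a : ∀ x y, circ (circ x y) x = circ y x
  sb2b : ∀ x y, bullet (bullet x y) x = bullet x y
  sb3 : ∀ x y, bullet x y = bullet y x ↔ circ x y = circ y x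
  sb4a : ∀ x, circ zero x = zero
  sb4b : ∀ x, circ x zero = zero

namespace PreSkewBA

variable (P : PreSkewBA)

/-- The natural partial order: `x ≤ y` iff `x = x ∘ y`. -/
def le (x y : P.X) : Prop := x = P.circ x y

/-- `j` is the join of `x` and `y` with respect to the natural partial order. -/
def IsJoin (j x y : P.X) : Prop :=
  P.le x j ∧ P.le y j ∧ ∀ z, P.le x z → P.le y z → P.le j z

/-- The downset `x↓ = {x ∘ s ∘ x : s}`. -/
def D (x : P.X) : Set P.X := {y | ∃ s, y = P.circ (P.circ x s) x}

end PreSkewBA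

/-- A right-hand skew Boolean algebra: a `PreSkewBA` in which, additionally, each
downset `x↓ = {x ∘ s ∘ x}` is a unital Boolean algebra: a bounded distributive lattice
with bottom `0` and top `x`, meets given by `∘` and joins by `•`, in which every
element has a complement (axiom (SB5)). -/
structure SkewBA extends PreSkewBA where
  sb5_bounded : ∀ x, ∀ y ∈ toPreSkewBA.D x,
    toPreSkewBA.le toPreSkewBA.zero y ∧ toPreSkewBA.le y x
  sb5_meet : ∀ x, ∀ y ∈ toPreSkewBA.D x, ∀ z ∈ toPreSkewBA.D x,
    toPreSkewBA.circ y z ∈ toPreSkewBA.D x ∧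
    toPreSkewBA.circ y z = toPreSkewBA.circ z y ∧
    toPreSkewBA.le (toPreSkewBA.circ y z) y ∧ toPreSkewBA.le (toPreSkewBA.circ y z) z ∧
    (∀ w ∈ toPreSkewBA.D x, toPreSkewBA.le w y → toPreSkewBA.le w z →
      toPreSkewBA.le w (toPreSkewBA.circ y z))
  sb5_join : ∀ x, ∀ y ∈ toPreSkewBA.D x, ∀ z ∈ toPreSkewBA.D x,
    toPreSkewBA.bullet y z ∈ toPreSkewBA.D x ∧
    toPreSkewBA.IsJoin (toPreSkewBA.bullet y z) y z
  sb5_distrib : ∀ x, ∀ y ∈ toPreSkewBA.D x, ∀ z ∈ toPreSkewBA.D x, ∀ w ∈ toPreSkewBA.D x,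
    toPreSkewBA.circ y (toPreSkewBA.bullet z w)
      = toPreSkewBA.bullet (toPreSkewBA.circ y z) (toPreSkewBA.circ y w)
  sb5_compl : ∀ x, ∀ y ∈ toPreSkewBA.D x, ∃ y' ∈ toPreSkewBA.D x,
    toPreSkewBA.circ y y' = toPreSkewBA.zero ∧ toPreSkewBA.bullet y y' = x

/-- In a right-hand skew Boolean algebra, `x • y = x ∨ (y \ x)`: whenever `c` is the
relative complement of `x ∘ y` in the unital Boolean algebra `y↓` (i.e. `c ∈ y↓`,
`c ∧ (x ∘ y) = 0` and `c ∨ (x ∘ y) = y`), the element `x • y` is the join of `x` and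
`c` with respect to the natural partial order. -/
theorem skewBA_bullet_eq_join_relative_complement (P : SkewBA) (x y c : P.X)
    (hc : c ∈ P.D y) (hmeet : P.circ c (P.circ x y) = P.zero)
    (hjoin : P.bullet (P.circ x y) c = y) :
    P.IsJoin (P.bullet x y) x c := by
  obtain ⟨s, hs⟩ := hc
  have hyc : P.circ y c = c := by
    rw [hs, ← P.circ_assoc, ← P.circ_assoc, P.circ_idem]
  have hxyD : P.circ x y ∈ P.D y := ⟨x, by rw [P.sb2a]⟩
  have hcomm := (P.sb5_meet y c ⟨s, hs⟩ (P.circ x y) hxyD).2.1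
  have hxc : P.circ x c = P.zero := by
    rw [← hyc, ← P.circ_assoc, ← hcomm, hmeet]
  have hcx : P.circ c x = P.zero := by
    rw [← P.sb2a x c, hxc, P.sb4a]
  have hbcomm : P.bullet x c = P.bullet c x := (P.sb3 x c).mpr (by rw [hxc, hcx])
  have hm : P.bullet x y = P.bullet x c := by
    rw [← hjoin, ← P.bullet_assoc, P.sb1c]
  refine ⟨(P.sb1a x y).symm, ?_, ?_⟩
  · show c = P.circ c (P.bullet x y)
    rw [hm, hbcomm]
    exact (P.sb1a c x).symm
  · intro z hx hz
    have hx2 : P.bullet x z = z := by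
      have h := P.sb1d z x
      rwa [← hx] at h
    have hz2 : P.bullet c z = z := by
      have h := P.sb1d z c
      rwa [← hz] at h
    have hz3 : P.bullet (P.bullet x y) z = z := by
      rw [hm, P.bullet_assoc, hz2, hx2]
    show P.bullet x y = P.circ (P.bullet x y) z
    rw [← hz3]
    exact (P.sb1a _ _).symm
end

section
/- Let (E, p, X) be an étale space over a Boolean space X, and let A be a compact-open subset of X. Then there exists an open local section B ⊆ E with p(B) = A. -/
/-- Gluing two local sections along disjointified images. -/
lemma glue_sections {E X : Type*} [TopologicalSpace E] [TopologicalSpace X] [T2Space X]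
    (p : E → X) (hc : Continuous p)
    {B₁ B₂ : Set E} {V₁ V₂ : Set X} (h1o : IsOpen B₁) (h1i : Set.InjOn p B₁)
    (h1im : p '' B₁ = V₁) (h2o : IsOpen B₂) (h2i : Set.InjOn p B₂) (h2im : p '' B₂ = V₂)
    (h1c : IsCompact V₁) :
    ∃ B, IsOpen B ∧ Set.InjOn p B ∧ p '' B = V₁ ∪ V₂ := by
  refine ⟨B₁ ∪ (B₂ ∩ p ⁻¹' V₁ᶜ), ?_, ?_, ?_⟩
  · exact h1o.union (h2o.inter (h1c.isClosed.isOpen_compl.preimage hc))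
  · rintro e (he | ⟨he, he'⟩) e' (hf | ⟨hf, hf'⟩) hpe
    · exact h1i he hf hpe
    · exact absurd (h1im ▸ Set.mem_image_of_mem p he : p e ∈ V₁) (hpe ▸ hf')
    · exact absurd (h1im ▸ Set.mem_image_of_mem p hf : p e' ∈ V₁) (hpe ▸ he')
    · exact h2i he hf hpe
  · rw [Set.image_union, h1im]
    have : p '' (B₂ ∩ p ⁻¹' V₁ᶜ) = V₂ ∩ V₁ᶜ := by
      apply Set.Subset.antisymm
      · rintro _ ⟨e, ⟨he, he'⟩, rfl⟩
        exact ⟨h2im ▸ Set.mem_image_of_mem p he, he'⟩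
      · rintro x ⟨hx, hx'⟩
        obtain ⟨e, he, rfl⟩ := h2im ▸ hx
        exact ⟨e, ⟨he, hx'⟩, rfl⟩
    rw [this]; ext x; by_cases hx : x ∈ V₁ <;> simp [hx]

/-- Let `p : E → X` be an étale space over a Boolean space `X` and `A` a compact-open
subset of `X`. Then there is an open local section `B ⊆ E` with `p '' B = A`. -/
theorem etale_exists_section_over_compact_open {E X : Type*} [TopologicalSpace E]
    [TopologicalSpace X] [T2Space X]
    (hX : TopologicalSpace.IsTopologicalBasis {U : Set X | IsCompact U ∧ IsOpen U})
    (p : E → X) (hp : IsLocalHomeomorph p) (hsurj : Function.Surjective p)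
    (A : Set X) (hAc : IsCompact A) (hAo : IsOpen A) :
    ∃ B : Set E, IsOpen B ∧ Set.InjOn p B ∧ p '' B = A := by
  have hc : Continuous p := hp.continuous
  -- For each x ∈ A, find a compact-open V ∋ x inside A admitting a section
  have key : ∀ x ∈ A, ∃ V : Set X, IsCompact V ∧ IsOpen V ∧ x ∈ V ∧ V ⊆ A ∧
      ∃ S, IsOpen S ∧ Set.InjOn p S ∧ p '' S = V := by
    intro x hxA
    obtain ⟨e, rfl⟩ := hsurj x
    obtain ⟨f, hef, hpf⟩ := hp e
    have hx_t : p e ∈ f.target := by rw [hpf]; exact f.map_source hef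
    obtain ⟨V, ⟨hVc, hVo⟩, hxV, hVsub⟩ :=
      hX.exists_subset_of_mem_open (⟨hxA, hx_t⟩ : p e ∈ A ∩ f.target)
        (hAo.inter f.open_target)
    refine ⟨V, hVc, hVo, hxV, fun y hy => (hVsub hy).1,
      f.source ∩ p ⁻¹' V, f.open_source.inter (hVo.preimage hc), ?_, ?_⟩
    · exact fun a ha b hb hab => f.injOn ha.1 hb.1 (by rw [← hpf]; exact hab)
    · apply Set.Subset.antisymm
      · rintro _ ⟨a, ⟨_, ha⟩, rfl⟩; exact ha
      · intro v hv
        have hvt : v ∈ f.target := (hVsub hv).2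
        refine ⟨f.symm v, ⟨f.map_target hvt, ?_⟩, ?_⟩
        · simpa [hpf, f.right_inv hvt] using hv
        · rw [hpf]; exact f.right_inv hvt
  choose! V hVc hVo hxV hVA S hSo hSi hSim using key
  obtain ⟨b, hbA, hbfin, hcov⟩ := hAc.elim_finite_subcover_image
    (fun x hx => hVo x hx) (fun x hx => Set.mem_biUnion hx (hxV x hx))
  -- induction on the finite set b
  have main : ∀ s : Set X, s.Finite → s ⊆ A →
      ∃ B, IsOpen B ∧ Set.InjOn p B ∧ p '' B = ⋃ x ∈ s, V x := by
    intro s hs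
    refine Set.Finite.induction_on (motive := fun s _ => s ⊆ A →
      ∃ B, IsOpen B ∧ Set.InjOn p B ∧ p '' B = ⋃ x ∈ s, V x) s hs
      (fun _ => ⟨∅, by simp⟩) ?_
    intro a s ha hsf ih hins
    have haA : a ∈ A := hins (Set.mem_insert a s)
    obtain ⟨B₂, hB₂o, hB₂i, hB₂im⟩ := ih (fun y hy => hins (Set.mem_insert_of_mem a hy))
    obtain ⟨B, hBo, hBi, hBim⟩ := glue_sections p hc (hSo a haA) (hSi a haA)
      (hSim a haA) hB₂o hB₂i hB₂im (hVc a haA)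
    refine ⟨B, hBo, hBi, ?_⟩
    rw [hBim]; simp [Set.biUnion_insert]
  obtain ⟨B, hBo, hBi, hBim⟩ := main b hbfin hbA
  refine ⟨B, hBo, hBi, ?_⟩
  rw [hBim]
  exact Set.Subset.antisymm (Set.iUnion₂_subset fun x hx => hVA x (hbA hx)) hcov
end

section
/- Let (E, p, X) be an étale space over a Boolean space. The set E* of compact-open local sections of p, ordered by inclusion and fibered over the generalized Boolean algebra X* of compact-open subsets of X via the map sending a section to its image, forms a Boolean set: it has minimum element ∅, any two compatible sections have a join (their union with appropriate restriction), and the only section over ∅ is ∅. In particular, if A, B ∈ E* are compatible then A ∪ (B ∩ p⁻¹(p(B) \ p(A))) is their join in E*. -/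
/-- The compact-open local sections of `p : E → X`. -/
def IsSection {E X : Type*} [TopologicalSpace E] (p : E → X) (A : Set E) : Prop :=
  IsCompact A ∧ IsOpen A ∧ Set.InjOn p A

/-- The restriction order on local sections: `A ≤ B` iff `A` is the restriction of `B`
to `p '' A`, i.e. `A = B ∩ p⁻¹(p '' A)`. -/
def SecLE {E X : Type*} (p : E → X) (A B : Set E) : Prop :=
  p '' A ⊆ p '' B ∧ A = B ∩ p ⁻¹' (p '' A)

/-- `M` is the meet of sections `A` and `B` in the restriction order. -/
def SecIsMeet {E X : Type*} [TopologicalSpace E] (p : E → X) (M A B : Set E) : Prop :=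
  IsSection p M ∧ SecLE p M A ∧ SecLE p M B ∧
    ∀ C, IsSection p C → SecLE p C A → SecLE p C B → SecLE p C M

/-- Sections `A` and `B` are compatible: their meet exists and lies over
`p '' A ∩ p '' B`. -/
def SecCompatible {E X : Type*} [TopologicalSpace E] (p : E → X) (A B : Set E) : Prop :=
  ∃ M, SecIsMeet p M A B ∧ p '' M = p '' A ∩ p '' B

/-- `J` is the join of sections `A` and `B` in the restriction order. -/
def SecIsJoin {E X : Type*} [TopologicalSpace E] (p : E → X) (J A B : Set E) : Prop :=
  IsSection p J ∧ SecLE p A J ∧ SecLE p B J ∧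
    ∀ C, IsSection p C → SecLE p A C → SecLE p B C → SecLE p J C

/-- The compact-open local sections of an étale space `p : E → X` over a Boolean space
form a Boolean set over the generalized Boolean algebra of compact-open subsets of `X`:
the empty section is the minimum, the only section over `∅` is `∅`, and any two
compatible sections `A, B` have the join `A ∪ (B ∩ p⁻¹(p '' B \ p '' A))`. -/
theorem etale_sections_boolean_set {E X : Type*} [TopologicalSpace E] [TopologicalSpace X]
    [T2Space X]
    (hX : TopologicalSpace.IsTopologicalBasis {U : Set X | IsCompact U ∧ IsOpen U})
    (p : E → X) (hp : IsLocalHomeomorph p) (hsurj : Function.Surjective p) :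
    IsSection p (∅ : Set E) ∧
    (∀ A, IsSection p A → SecLE p ∅ A) ∧
    (∀ A, IsSection p A → p '' A = ∅ → A = ∅) ∧
    (∀ A B, IsSection p A → IsSection p B → SecCompatible p A B →
      SecIsJoin p (A ∪ (B ∩ p ⁻¹' (p '' B \ p '' A))) A B) := by
  have hc : Continuous p := hp.continuous
  have ho : IsOpenMap p := hp.isOpenMap
  refine ⟨⟨isCompact_empty, isOpen_empty, Set.injOn_empty p⟩, ?_, ?_, ?_⟩
  · intro A hA
    constructor <;> simp
  · intro A hA h
    ext x
    simp only [Set.mem_empty_iff_false, iff_false]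
    intro hx
    have : p x ∈ p '' A := ⟨x, hx, rfl⟩
    rw [h] at this
    exact this
  · rintro A B hA hB ⟨M, hM, hMim⟩
    set S : Set X := p '' B \ p '' A with hS
    set J : Set E := A ∪ (B ∩ p ⁻¹' S) with hJ
    have hAim_open : IsOpen (p '' A) := ho _ hA.2.1
    have hAim_cl : IsClosed (p '' A) := (hA.1.image hc).isClosed
    have hBim_open : IsOpen (p '' B) := ho _ hB.2.1
    have hS_open : IsOpen S := by
      rw [hS, Set.diff_eq]
      exact hBim_open.inter hAim_cl.isOpen_compl
    -- key lemmas from compatibility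
    have hMA : M ⊆ A := by
      rw [hM.2.1.2]; exact Set.inter_subset_left
    have hMB : M ⊆ B := by
      rw [hM.2.2.1.2]; exact Set.inter_subset_left
    have keyB : ∀ b ∈ B, p b ∈ p '' A → b ∈ A := by
      intro b hb hpb
      have hbM : b ∈ M := by
        rw [hM.2.2.1.2]
        exact ⟨hb, by rw [hMim]; exact ⟨hpb, ⟨b, hb, rfl⟩⟩⟩
      exact hMA hbM
    have keyA : ∀ a ∈ A, p a ∈ p '' B → a ∈ B := by
      intro a ha hpa
      have haM : a ∈ M := by
        rw [hM.2.1.2]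
        exact ⟨ha, by rw [hMim]; exact ⟨⟨a, ha, rfl⟩, hpa⟩⟩
      exact hMB haM
    have hsub2 : B ∩ p ⁻¹' S = B ∩ p ⁻¹' (p '' A)ᶜ := by
      ext b
      constructor
      · rintro ⟨hb, hbs⟩; exact ⟨hb, hbs.2⟩
      · rintro ⟨hb, hbs⟩; exact ⟨hb, ⟨⟨b, hb, rfl⟩, hbs⟩⟩
    have hJcompact : IsCompact J := by
      refine hA.1.union ?_
      rw [hsub2]
      exact hB.1.inter_right (isClosed_compl_iff.mpr (hAim_open.preimage hc))
    have hJopen : IsOpen J := hA.2.1.union (hB.2.1.inter (hS_open.preimage hc))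
    have hJinj : Set.InjOn p J := by
      rintro x (hx | hx) y (hy | hy) hxy
      · exact hA.2.2 hx hy hxy
      · exact absurd (hxy ▸ ⟨x, hx, rfl⟩ : p y ∈ p '' A) hy.2.2
      · exact absurd (hxy ▸ ⟨y, hy, rfl⟩ : p x ∈ p '' A) hx.2.2
      · exact hB.2.2 hx.1 hy.1 hxy
    have hAJ : A ⊆ J := Set.subset_union_left
    refine ⟨⟨hJcompact, hJopen, hJinj⟩, ?_, ?_, ?_⟩
    · refine ⟨Set.image_mono hAJ, ?_⟩
      ext x
      constructor
      · intro hx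
        exact ⟨hAJ hx, ⟨x, hx, rfl⟩⟩
      · rintro ⟨hxJ | hxJ, hpx⟩
        · exact hxJ
        · exact absurd hpx hxJ.2.2
    · constructor
      · rintro z ⟨b, hb, rfl⟩
        by_cases h : p b ∈ p '' A
        · exact ⟨b, hAJ (keyB b hb h), rfl⟩
        · exact ⟨b, Or.inr ⟨hb, ⟨⟨b, hb, rfl⟩, h⟩⟩, rfl⟩
      · ext x
        constructor
        · intro hx
          refine ⟨?_, ⟨x, hx, rfl⟩⟩
          by_cases h : p x ∈ p '' A
          · exact Or.inl (keyB x hx h)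
          · exact Or.inr ⟨hx, ⟨⟨x, hx, rfl⟩, h⟩⟩
        · rintro ⟨hxJ | hxJ, hpx⟩
          · exact keyA x hxJ hpx
          · exact hxJ.1
    · intro C hC hAC hBC
      have hAC' : A ⊆ C := by rw [hAC.2]; exact Set.inter_subset_left
      have hBC' : B ⊆ C := by rw [hBC.2]; exact Set.inter_subset_left
      constructor
      · rintro z ⟨x, hx | hx, rfl⟩
        · exact ⟨x, hAC' hx, rfl⟩
        · exact ⟨x, hBC' hx.1, rfl⟩
      · ext x
        constructor
        · intro hx
          refine ⟨?_, ⟨x, hx, rfl⟩⟩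
          rcases hx with hx | hx
          · exact hAC' hx
          · exact hBC' hx.1
        · rintro ⟨hxC, ⟨y, hyJ, hpy⟩⟩
          rcases hyJ with hy | hy
          · have hpxA : p x ∈ p '' A := hpy ▸ ⟨y, hy, rfl⟩
            have : x ∈ A := by rw [hAC.2]; exact ⟨hxC, hpxA⟩
            exact Or.inl this
          · have hpxS : p x ∈ S := hpy ▸ hy.2
            have hpxB : p x ∈ p '' B := hpxS.1
            have : x ∈ B := by rw [hBC.2]; exact ⟨hxC, hpxB⟩
            exact Or.inr ⟨this, hpxS⟩
end
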